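/- Let R be a commutative Q-algebra, f ∈ R[[z]] with f(0)=0, f'(0)=1, and g = f^{-1}. Writing c = f(z) ∈ R((z)), the R-linear functional φ : R[c^{-1}]·c^{-1} → R on the span of {c^{-k-1} : k ≥ 0} defined by φ(c^{-k-1}) = res_{z=0} f(z)^{-k-1} satisfies: φ(c^{-k-1}) = [u^k] g'(u) for all k, and in particular φ(c^{-1}) = 1. -/

import Mathlib

open PowerSeries LaurentSeries

/-- Composition `f ∘ g` of formal power series (intended for `g` with zero constant term). -/
noncomputable def psComp {R : Type*} [CommRing R] (f g : R⟦X⟧) : R⟦X⟧ :=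
  PowerSeries.mk fun n => ∑ i ∈ Finset.range (n + 1),
    PowerSeries.coeff i f * PowerSeries.coeff n (g ^ i)

namespace LagAux

variable {R : Type*} [CommRing R]

lemma coeff_psComp (f g : R⟦X⟧) (n : ℕ) :
    coeff n (psComp f g) = ∑ i ∈ Finset.range (n + 1),
      coeff i f * coeff n (g ^ i) := by
  simp [psComp, coeff_mk]

lemma coeff_pow_eq_zero {g : R⟦X⟧} (hg : constantCoeff g = 0) {i n : ℕ} (h : n < i) :
    coeff n (g ^ i) = 0 := by
  have hdvd : (X : R⟦X⟧) ^ i ∣ g ^ i :=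
    pow_dvd_pow_of_dvd (PowerSeries.X_dvd_iff.mpr hg) i
  exact (PowerSeries.X_pow_dvd_iff.mp hdvd) n h

lemma constantCoeff_psComp (f g : R⟦X⟧) :
    constantCoeff (psComp f g) = constantCoeff f := by
  have := coeff_psComp f g 0
  simpa using this

lemma coeff_eq_of_dvd {A B : R⟦X⟧} {N n : ℕ} (h : (X : R⟦X⟧) ^ N ∣ A - B) (hn : n < N) :
    coeff n A = coeff n B := by
  have := (PowerSeries.X_pow_dvd_iff.mp h) n hn
  rw [map_sub, sub_eq_zero] at this
  exact this

lemma eval₂_trunc_eq_sum (h g : R⟦X⟧) (N : ℕ) :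
    Polynomial.eval₂ (C) g (trunc N h) =
      ∑ i ∈ Finset.range N, C (coeff i h) * g ^ i := by
  rcases N with _ | M
  · simp [PowerSeries.trunc_zero']
  · rw [Polynomial.eval₂_eq_sum_range' (C) (natDegree_trunc_lt h M) g]
    refine Finset.sum_congr rfl fun i hi => ?_
    rw [Finset.mem_range] at hi
    rw [coeff_trunc, if_pos hi]

/-- truncation congruence -/
lemma psComp_trunc (f g : R⟦X⟧) (hg : constantCoeff g = 0) (N : ℕ) :
    (X : R⟦X⟧) ^ N ∣ psComp f g - Polynomial.eval₂ (C) g (trunc N f) := by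
  rw [PowerSeries.X_pow_dvd_iff]
  intro n hn
  rw [map_sub, coeff_psComp, eval₂_trunc_eq_sum, map_sum, sub_eq_zero]
  have hsub : Finset.range (n + 1) ⊆ Finset.range N := Finset.range_subset_range.mpr hn
  rw [Finset.sum_subset hsub]
  · refine Finset.sum_congr rfl fun i _ => ?_
    rw [PowerSeries.coeff_C_mul]
  · intro i _ hi
    rw [Finset.mem_range, not_lt] at hi
    rw [coeff_pow_eq_zero hg (by omega), mul_zero]

lemma X_pow_dvd_eval₂ {g : R⟦X⟧} (hg : constantCoeff g = 0) {p : Polynomial R} {N : ℕ}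
    (hp : ∀ i < N, p.coeff i = 0) :
    (X : R⟦X⟧) ^ N ∣ p.eval₂ (C) g := by
  obtain ⟨q, rfl⟩ := Polynomial.X_pow_dvd_iff.mpr hp
  rw [Polynomial.eval₂_mul, Polynomial.eval₂_X_pow]
  exact Dvd.dvd.mul_right (pow_dvd_pow_of_dvd (PowerSeries.X_dvd_iff.mpr hg) N) _

lemma eval₂_congr_dvd (p : Polynomial R) (s t d : R⟦X⟧) (h : d ∣ s - t) :
    d ∣ p.eval₂ (C) s - p.eval₂ (C) t := by
  rw [Polynomial.eval₂_eq_eval_map, Polynomial.eval₂_eq_eval_map]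
  exact dvd_trans h (Polynomial.sub_dvd_eval_sub s t (p.map (C)))

lemma X_pow_dvd_sub_trunc (b : R⟦X⟧) (N : ℕ) :
    (X : R⟦X⟧) ^ N ∣ b - ((trunc N b : Polynomial R) : R⟦X⟧) := by
  rw [PowerSeries.X_pow_dvd_iff]
  intro n hn
  rw [map_sub, Polynomial.coeff_coe, coeff_trunc, if_pos hn, sub_self]

lemma psComp_X_right (f : R⟦X⟧) : psComp f X = f := by
  ext n
  rw [coeff_psComp]
  rw [Finset.sum_eq_single n]
  · rw [coeff_X_pow, if_pos rfl, mul_one]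
  · intro i _ hi
    rw [coeff_X_pow, if_neg (fun h => hi h.symm), mul_zero]
  · intro h
    exact absurd (Finset.self_mem_range_succ n) h

lemma psComp_X_left (g : R⟦X⟧) (hg : constantCoeff g = 0) : psComp X g = g := by
  ext n
  rw [coeff_psComp]
  rw [Finset.sum_eq_single 1]
  · rw [PowerSeries.coeff_one_X, one_mul, pow_one]
  · intro i _ hi
    rw [PowerSeries.coeff_X, if_neg hi, zero_mul]
  · intro h
    rw [Finset.mem_range, not_lt] at h
    have hn0 : n = 0 := by omega
    subst hn0
    rw [pow_one, PowerSeries.coeff_one_X, one_mul,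
      PowerSeries.coeff_zero_eq_constantCoeff, hg]

end LagAux

namespace LagAux
variable {R : Type*} [CommRing R]

lemma psComp_assoc (a b c : R⟦X⟧) (hb : constantCoeff b = 0)
    (hc : constantCoeff c = 0) :
    psComp (psComp a b) c = psComp a (psComp b c) := by
  ext n
  set N := n + 1 with hN
  set Pa := trunc N a with hPa
  set Pb := trunc N b with hPb
  have hbc0 : constantCoeff (psComp b c) = 0 := by
    rw [constantCoeff_psComp]; exact hb
  -- coercion of comp
  have hcoe : ((Pa.comp Pb : Polynomial R) : R⟦X⟧) =
      Pa.eval₂ (C) ((Pb : Polynomial R) : R⟦X⟧) := by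
    have hφ := Polynomial.hom_eval₂ Pa Polynomial.C
      (Polynomial.coeToPowerSeries.ringHom (R := R)) Pb
    have hC : (Polynomial.coeToPowerSeries.ringHom (R := R)).comp
        (Polynomial.C : R →+* Polynomial R) = C := by
      ext r
      simp
    rw [Polynomial.comp, ← Polynomial.coeToPowerSeries.ringHom_apply, hφ, hC,
      Polynomial.coeToPowerSeries.ringHom_apply]
  have h1 : (X : R⟦X⟧) ^ N ∣ psComp a b - Pa.eval₂ (C) b := psComp_trunc a b hb N
  have h2 : (X : R⟦X⟧) ^ N ∣ psComp b c - Pb.eval₂ (C) c := psComp_trunc b c hc N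
  have h3 : (X : R⟦X⟧) ^ N ∣ psComp (psComp a b) c
      - Polynomial.eval₂ (C) c (trunc N (psComp a b)) := psComp_trunc _ c hc N
  have h4 : (X : R⟦X⟧) ^ N ∣ psComp a (psComp b c) - Pa.eval₂ (C) (psComp b c) :=
    psComp_trunc a _ hbc0 N
  have h5 : (X : R⟦X⟧) ^ N ∣ Pa.eval₂ (C) (psComp b c) - Pa.eval₂ (C) (Pb.eval₂ (C) c) :=
    eval₂_congr_dvd Pa _ _ _ h2
  have h6 : Pa.eval₂ (C) (Pb.eval₂ (C) c) = (Pa.comp Pb).eval₂ (C) c :=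
    by rw [Polynomial.eval₂_comp]
  -- A' and the comp agree below N
  have hA : (X : R⟦X⟧) ^ N ∣ Pa.eval₂ (C) b - ((Pa.comp Pb : Polynomial R) : R⟦X⟧) := by
    rw [hcoe]
    exact eval₂_congr_dvd Pa _ _ _ (X_pow_dvd_sub_trunc b N)
  have h7 : (X : R⟦X⟧) ^ N ∣ Polynomial.eval₂ (C) c (trunc N (psComp a b))
      - (Pa.comp Pb).eval₂ (C) c := by
    rw [← Polynomial.eval₂_sub]
    refine X_pow_dvd_eval₂ hc fun i hi => ?_
    rw [Polynomial.coeff_sub, coeff_trunc, if_pos hi, sub_eq_zero]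
    have e1 : coeff i (psComp a b) = coeff i (Pa.eval₂ (C) b) := coeff_eq_of_dvd h1 hi
    have e2 : coeff i (Pa.eval₂ (C) b) = (Pa.comp Pb).coeff i := by
      have := coeff_eq_of_dvd hA hi
      rwa [Polynomial.coeff_coe] at this
    rw [e1, e2]
  have key : (X : R⟦X⟧) ^ N ∣ psComp (psComp a b) c - psComp a (psComp b c) := by
    have hrw : psComp (psComp a b) c - psComp a (psComp b c) =
        (psComp (psComp a b) c - Polynomial.eval₂ (C) c (trunc N (psComp a b)))
        + (Polynomial.eval₂ (C) c (trunc N (psComp a b)) - (Pa.comp Pb).eval₂ (C) c)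
        - (Pa.eval₂ (C) (psComp b c) - Pa.eval₂ (C) (Pb.eval₂ (C) c))
        - (psComp a (psComp b c) - Pa.eval₂ (C) (psComp b c)) := by
      rw [h6]; ring
    rw [hrw]
    exact dvd_sub (dvd_sub (dvd_add h3 h7) h5) h4
  exact coeff_eq_of_dvd key (by omega)

lemma psComp_left_cancel {f a b : R⟦X⟧} (hf1 : coeff 1 f = 1)
    (ha : constantCoeff a = 0) (hb : constantCoeff b = 0)
    (h : psComp f a = psComp f b) : a = b := by
  ext n
  induction n using Nat.strong_induction_on with
  | _ n IH =>
    rcases n with _ | n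
    · simp only [PowerSeries.coeff_zero_eq_constantCoeff, ha, hb]
    · -- powers agree at coefficient n+1 for i ≥ 2
      have hpow : ∀ i, 2 ≤ i → coeff (n + 1) (a ^ i) = coeff (n + 1) (b ^ i) := by
        intro i hi
        have hd : (X : R⟦X⟧) ^ (n + 2) ∣ a ^ i - b ^ i := by
          rw [← geom_sum₂_mul]
          have hX : (X : R⟦X⟧) ∣ ∑ j ∈ Finset.range i, a ^ j * b ^ (i - 1 - j) := by
            refine Finset.dvd_sum fun j _ => ?_
            rcases Nat.eq_zero_or_pos j with hj | hj
            · subst hj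
              have : 1 ≤ i - 1 - 0 := by omega
              exact Dvd.dvd.mul_left
                (dvd_pow (PowerSeries.X_dvd_iff.mpr hb) (by omega)) _
            · exact Dvd.dvd.mul_right
                (dvd_pow (PowerSeries.X_dvd_iff.mpr ha) (by omega)) _
          have hab : (X : R⟦X⟧) ^ (n + 1) ∣ a - b := by
            rw [PowerSeries.X_pow_dvd_iff]
            intro m hm
            rw [map_sub, IH m hm, sub_self]
          have := mul_dvd_mul hX hab
          rwa [← pow_succ'] at this
        exact coeff_eq_of_dvd hd (by omega)
      have hc := congrArg (coeff (n + 1)) h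
      rw [coeff_psComp, coeff_psComp] at hc
      have hmem : 1 ∈ Finset.range (n + 1 + 1) := by
        rw [Finset.mem_range]; omega
      rw [← Finset.add_sum_erase _ _ hmem, ← Finset.add_sum_erase _ _ hmem] at hc
      have hrest : ∑ i ∈ (Finset.range (n + 1 + 1)).erase 1,
          coeff i f * coeff (n + 1) (a ^ i) =
          ∑ i ∈ (Finset.range (n + 1 + 1)).erase 1,
          coeff i f * coeff (n + 1) (b ^ i) := by
        refine Finset.sum_congr rfl fun i hi => ?_
        rw [Finset.mem_erase] at hi
        rcases Nat.eq_zero_or_pos i with h0 | h1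
        · subst h0; rfl
        · rw [hpow i (by omega)]
      rw [hrest] at hc
      have := add_right_cancel hc
      rw [hf1, pow_one, pow_one, one_mul, one_mul] at this
      exact this

end LagAux

namespace LagAux
variable {R : Type*} [CommRing R]

lemma deriv_eq (h : R⟦X⟧) : d⁄dX R h = h.derivativeFun := rfl

lemma derivativeFun_X : (X : R⟦X⟧).derivativeFun = 1 := by
  rw [← deriv_eq]; exact PowerSeries.derivative_X

lemma derivativeFun_sub (a b : R⟦X⟧) :
    (a - b).derivativeFun = a.derivativeFun - b.derivativeFun := by
  rw [← deriv_eq, ← deriv_eq, ← deriv_eq, map_sub]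

/-- derivative weakens a congruence by one power of X -/
lemma dvd_derivativeFun_sub {A B : R⟦X⟧} {m : ℕ}
    (h : (X : R⟦X⟧) ^ (m + 1) ∣ A - B) :
    (X : R⟦X⟧) ^ m ∣ A.derivativeFun - B.derivativeFun := by
  obtain ⟨q, hq⟩ := h
  rw [← derivativeFun_sub, hq, PowerSeries.derivativeFun_mul]
  refine dvd_add ?_ ?_
  · rw [smul_eq_mul]
    exact (pow_dvd_pow (X : R⟦X⟧) (Nat.le_succ m)).mul_right _
  · rw [smul_eq_mul, ← deriv_eq, Derivation.leibniz_pow, deriv_eq, derivativeFun_X]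
    simp only [smul_eq_mul, mul_one, Nat.add_sub_cancel, nsmul_eq_mul]
    exact Dvd.dvd.mul_left (Dvd.dvd.mul_left (dvd_refl _) _) q

/-- chain rule for polynomial evaluation into power series -/
lemma derivativeFun_eval₂ (p : Polynomial R) (b : R⟦X⟧) :
    (p.eval₂ (C) b).derivativeFun =
      (Polynomial.derivative p).eval₂ (C) b * b.derivativeFun := by
  induction p using Polynomial.induction_on' with
  | add p q hp hq =>
    rw [Polynomial.eval₂_add, PowerSeries.derivativeFun_add, hp, hq, map_add,
      Polynomial.eval₂_add, add_mul]
  | monomial i r =>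
    rw [Polynomial.eval₂_monomial, Polynomial.derivative_monomial,
      Polynomial.eval₂_monomial]
    rw [PowerSeries.derivativeFun_mul, ← deriv_eq (C r), PowerSeries.derivativeFun_C, smul_zero, add_zero,
      smul_eq_mul]
    rw [← deriv_eq, Derivation.leibniz_pow, deriv_eq]
    rw [map_mul, map_natCast]
    simp only [smul_eq_mul]
    ring

lemma derivativeFun_psComp (a b : R⟦X⟧) (hb : constantCoeff b = 0) :
    (psComp a b).derivativeFun = psComp a.derivativeFun b * b.derivativeFun := by
  ext n
  set N := n + 2 with hN
  set P := trunc N a with hP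
  have h1 : (X : R⟦X⟧) ^ N ∣ psComp a b - P.eval₂ (C) b := psComp_trunc a b hb N
  have h2 : (X : R⟦X⟧) ^ (n + 1) ∣
      (psComp a b).derivativeFun - (P.eval₂ (C) b).derivativeFun :=
    dvd_derivativeFun_sub h1
  have h3 : (X : R⟦X⟧) ^ (n + 1) ∣
      psComp a.derivativeFun b - (Polynomial.derivative P).eval₂ (C) b := by
    have := psComp_trunc a.derivativeFun b hb (n + 1)
    rwa [← deriv_eq a, PowerSeries.trunc_derivativeFun, deriv_eq] at this
  have h4 : (X : R⟦X⟧) ^ (n + 1) ∣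
      (psComp a b).derivativeFun - psComp a.derivativeFun b * b.derivativeFun := by
    have hrw : (psComp a b).derivativeFun - psComp a.derivativeFun b * b.derivativeFun =
        ((psComp a b).derivativeFun - (P.eval₂ (C) b).derivativeFun)
        - (psComp a.derivativeFun b - (Polynomial.derivative P).eval₂ (C) b)
          * b.derivativeFun := by
      rw [derivativeFun_eval₂]; ring
    rw [hrw]
    exact dvd_sub h2 (Dvd.dvd.mul_right h3 _)
  exact coeff_eq_of_dvd h4 (by omega)

end LagAux

namespace LagAux
variable {R : Type*} [CommRing R]

lemma natCast_mul_cancel {S : Type*} [CommRing S] [Algebra ℚ S] {m : ℕ} {x y : S}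
    (h : ((m + 1 : ℕ) : S) * x = ((m + 1 : ℕ) : S) * y) : x = y := by
  have hne : ((m + 1 : ℕ) : ℚ) ≠ 0 := Nat.cast_ne_zero.mpr (Nat.succ_ne_zero m)
  have h1 : algebraMap ℚ S (((m + 1 : ℕ) : ℚ))⁻¹ * (((m + 1 : ℕ) : S) * x)
      = algebraMap ℚ S (((m + 1 : ℕ) : ℚ))⁻¹ * (((m + 1 : ℕ) : S) * y) := by rw [h]
  rw [← mul_assoc, ← mul_assoc, ← map_natCast (algebraMap ℚ S) (m + 1), ← map_mul,
    inv_mul_cancel₀ hne, map_one, one_mul, one_mul] at h1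
  exact h1

lemma res_lemma {R : Type*} [CommRing R] [Algebra ℚ R] {u w : R⟦X⟧} (huw : u * w = 1)
    (j : ℕ) :
    coeff j (w ^ (j + 1) * (X * u).derivativeFun) = if j = 0 then 1 else 0 := by
  have hf' : (X * u).derivativeFun = X * u.derivativeFun + u := by
    rw [PowerSeries.derivativeFun_mul, derivativeFun_X, smul_eq_mul, smul_eq_mul, mul_one]
  rcases j with _ | m
  · rw [if_pos rfl, hf', pow_one]
    have hc : constantCoeff (w * (X * u.derivativeFun + u)) = 1 := by
      rw [map_mul, map_add, map_mul, constantCoeff_X, zero_mul, zero_add,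
        ← map_mul, mul_comm w u, huw, map_one]
    simpa [PowerSeries.coeff_zero_eq_constantCoeff] using hc
  · rw [if_neg (Nat.succ_ne_zero m), hf']
    have hsplit : w ^ (m + 1 + 1) * (X * u.derivativeFun + u)
        = X * (w ^ (m + 2) * u.derivativeFun) + w ^ (m + 1) := by
      have h1 : w ^ (m + 2) * u = w ^ (m + 1) := by
        calc w ^ (m + 2) * u = (u * w) * w ^ (m + 1) := by ring
        _ = w ^ (m + 1) := by rw [huw, one_mul]
      calc w ^ (m + 1 + 1) * (X * u.derivativeFun + u)
          = X * (w ^ (m + 2) * u.derivativeFun) + w ^ (m + 2) * u := by ring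
      _ = _ := by rw [h1]
    rw [hsplit, map_add, PowerSeries.coeff_succ_X_mul]
    have hw' : (0 : R⟦X⟧) = u * w.derivativeFun + w * u.derivativeFun := by
      have h0 := PowerSeries.derivativeFun_mul u w
      rw [huw, PowerSeries.derivativeFun_one, smul_eq_mul, smul_eq_mul] at h0
      exact h0
    have hkey : w ^ m * w.derivativeFun = -(w ^ (m + 2) * u.derivativeFun) := by
      linear_combination (w ^ (m + 1)) * hw'.symm - (w ^ m * w.derivativeFun) * huw
    have hD : (w ^ (m + 1)).derivativeFun = (m + 1) • (w ^ m • w.derivativeFun) := by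
      rw [← deriv_eq, Derivation.leibniz_pow, deriv_eq, Nat.add_sub_cancel]
    have c := congrArg (coeff m) hD
    rw [← deriv_eq (w ^ (m + 1)), PowerSeries.coeff_derivativeFun, map_nsmul, smul_eq_mul, hkey, map_neg,
      nsmul_eq_mul] at c
    have c2 : ((m + 1 : ℕ) : R) * coeff (m + 1) (w ^ (m + 1))
        = ((m + 1 : ℕ) : R) * (- coeff m (w ^ (m + 2) * u.derivativeFun)) := by
      push_cast at c ⊢
      linear_combination c
    have c3 := natCast_mul_cancel c2
    rw [c3]
    ring
end LagAux

/-- with `c = f(z)` a unit multiple of `z` in `R((z))` and `g = f⁻¹` the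
compositional inverse, the linear functional `φ(c^{-k-1}) := res_{z=0} f(z)^{-k-1}` on the
span of the negative powers of `c` satisfies `φ(c^{-k-1}) = [uᵏ] g'(u)` for all `k`, and in
particular `φ(c^{-1}) = 1`. Here `c^{-1}` is any multiplicative inverse `finv` of `f` in
the Laurent series ring. -/
theorem residue_functional_values
    (R : Type*) [CommRing R] [Algebra ℚ R] (f g : R⟦X⟧)
    (hf0 : constantCoeff f = 0) (hf1 : coeff 1 f = 1)
    (hg0 : constantCoeff g = 0) (hfg : psComp f g = X)
    (finv : LaurentSeries R) (hfinv : (f : LaurentSeries R) * finv = 1) :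
    (∀ k : ℕ, (finv ^ (k + 1)).coeff (-1) = coeff k g.derivativeFun) ∧
    finv.coeff (-1) = 1 := by
  -- coeff 1 of g is 1
  have hg1 : coeff 1 g = 1 := by
    have h := congrArg (coeff 1) hfg
    rw [LagAux.coeff_psComp, PowerSeries.coeff_one_X, Finset.sum_range_succ,
      Finset.sum_range_one, pow_zero, pow_one, hf1, one_mul] at h
    simpa using h
  -- factor f = X * u
  obtain ⟨u, hu⟩ := PowerSeries.X_dvd_iff.mpr hf0
  have hu0 : constantCoeff u = 1 := by
    have h1 : coeff 0 u = 1 := by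
      rw [← PowerSeries.coeff_succ_X_mul 0 u, ← hu]; exact hf1
    rwa [PowerSeries.coeff_zero_eq_constantCoeff] at h1
  obtain ⟨U, hU⟩ : IsUnit u := PowerSeries.isUnit_iff_constantCoeff.mpr (hu0 ▸ isUnit_one)
  set w : R⟦X⟧ := ↑U⁻¹ with hw
  have huw : u * w = 1 := by rw [hw, ← hU]; exact U.mul_inv
  -- g ∘ f = X
  have hgf : psComp g f = X := by
    apply LagAux.psComp_left_cancel hf1
      (by rw [LagAux.constantCoeff_psComp]; exact hg0) PowerSeries.constantCoeff_X
    rw [LagAux.psComp_X_right, ← LagAux.psComp_assoc f g f hg0 hf0, hfg,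
      LagAux.psComp_X_left f hf0]
  -- key: (g' ∘ f) * f' = 1
  have hkey : psComp g.derivativeFun f * f.derivativeFun = 1 := by
    have h := LagAux.derivativeFun_psComp g f hf0
    rw [hgf, LagAux.derivativeFun_X] at h
    exact h.symm
  -- main power series identity
  have hmain : ∀ k : ℕ, coeff k (w ^ (k + 1)) = coeff k g.derivativeFun := by
    intro k
    set N := k + 2 with hN
    set S : R⟦X⟧ := ∑ m ∈ Finset.range N, C (coeff m g.derivativeFun) * f ^ m with hS
    have hT : (X : R⟦X⟧) ^ N ∣ psComp g.derivativeFun f - S := by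
      have h := LagAux.psComp_trunc g.derivativeFun f hf0 N
      rwa [LagAux.eval₂_trunc_eq_sum] at h
    have hT2 : (X : R⟦X⟧) ^ N ∣ w ^ (k + 1) - w ^ (k + 1) * (S * f.derivativeFun) := by
      have hrw : w ^ (k + 1) - w ^ (k + 1) * (S * f.derivativeFun)
          = w ^ (k + 1) * f.derivativeFun * (psComp g.derivativeFun f - S)
            + w ^ (k + 1) * (1 - psComp g.derivativeFun f * f.derivativeFun) := by ring
      rw [hrw, hkey, sub_self, mul_zero, add_zero]
      exact Dvd.dvd.mul_left hT _
    have e1 : coeff k (w ^ (k + 1)) = coeff k (w ^ (k + 1) * (S * f.derivativeFun)) :=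
      LagAux.coeff_eq_of_dvd hT2 (by omega)
    have e2 : w ^ (k + 1) * (S * f.derivativeFun)
        = ∑ m ∈ Finset.range N,
            C (coeff m g.derivativeFun) * (w ^ (k + 1) * f ^ m * f.derivativeFun) := by
      rw [hS, Finset.sum_mul, Finset.mul_sum]
      exact Finset.sum_congr rfl fun m _ => by ring
    have e3 : ∀ m ∈ Finset.range N,
        coeff k (C (coeff m g.derivativeFun) * (w ^ (k + 1) * f ^ m * f.derivativeFun))
          = if m = k then coeff k g.derivativeFun else 0 := by
      intro m hm
      rw [Finset.mem_range] at hm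
      rw [PowerSeries.coeff_C_mul]
      rcases lt_or_ge m (k + 1) with hmk | hmk
      · -- m ≤ k
        have hterm : w ^ (k + 1) * f ^ m * f.derivativeFun
            = X ^ m * (w ^ (k - m + 1) * (X * u).derivativeFun) := by
          have hww : w ^ (k + 1) * u ^ m = w ^ (k - m + 1) := by
            have hpow1 : u ^ m * w ^ m = 1 := by rw [← mul_pow, huw, one_pow]
            have hsplit : w ^ (k + 1) = w ^ m * w ^ (k - m + 1) := by
              rw [← pow_add]; congr 1; omega
            rw [hsplit]
            calc w ^ m * w ^ (k - m + 1) * u ^ m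
                = (u ^ m * w ^ m) * w ^ (k - m + 1) := by ring
            _ = w ^ (k - m + 1) := by rw [hpow1, one_mul]
          calc w ^ (k + 1) * f ^ m * f.derivativeFun
              = X ^ m * ((w ^ (k + 1) * u ^ m) * (X * u).derivativeFun) := by
                rw [hu, mul_pow]; ring
          _ = _ := by rw [hww]
        rw [hterm, PowerSeries.coeff_X_pow_mul' _ m k, if_pos (by omega),
          LagAux.res_lemma huw (k - m)]
        by_cases hmk2 : m = k
        · subst hmk2
          rw [if_pos (by omega), if_pos rfl, mul_one]
        · rw [if_neg (by omega), if_neg hmk2, mul_zero]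
      · -- m = k + 1
        have hm' : m = k + 1 := by omega
        subst hm'
        have hdvd : (X : R⟦X⟧) ^ (k + 1) ∣ w ^ (k + 1) * f ^ (k + 1) * f.derivativeFun := by
          refine Dvd.dvd.mul_right (Dvd.dvd.mul_left ?_ _) _
          rw [hu, mul_pow]
          exact Dvd.dvd.mul_right dvd_rfl _
        rw [PowerSeries.X_pow_dvd_iff.mp hdvd k (by omega), mul_zero,
          if_neg (by omega)]
    rw [e1, e2, map_sum, Finset.sum_congr rfl e3, Finset.sum_ite_eq' (Finset.range N) k]
    rw [if_pos (by rw [Finset.mem_range]; omega)]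
  -- Laurent series part
  have hMeq : finv = HahnSeries.single (-1 : ℤ) (1 : R) * (w : LaurentSeries R) := by
    have hM : (f : LaurentSeries R) * (HahnSeries.single (-1 : ℤ) (1 : R)
        * (w : LaurentSeries R)) = 1 := by
      rw [hu, PowerSeries.coe_mul, PowerSeries.coe_X]
      calc HahnSeries.single (1 : ℤ) (1 : R) * ↑u * (HahnSeries.single (-1 : ℤ) (1 : R) * ↑w)
          = (HahnSeries.single (1 : ℤ) (1 : R) * HahnSeries.single (-1 : ℤ) (1 : R))
            * ((u : LaurentSeries R) * ↑w) := by ring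
      _ = 1 := by
          rw [HahnSeries.single_mul_single, ← PowerSeries.coe_mul, huw]
          norm_num
    calc finv = ((f : LaurentSeries R)
          * (HahnSeries.single (-1 : ℤ) (1 : R) * ↑w)) * finv := by rw [hM, one_mul]
    _ = ((f : LaurentSeries R) * finv)
          * (HahnSeries.single (-1 : ℤ) (1 : R) * ↑w) := by ring
    _ = HahnSeries.single (-1 : ℤ) (1 : R) * ↑w := by rw [hfinv, one_mul]
  have hpowk : ∀ k : ℕ, (finv ^ (k + 1)).coeff (-1) = coeff k (w ^ (k + 1)) := by
    intro k
    have hp : finv ^ (k + 1)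
        = HahnSeries.single (-(k + 1) : ℤ) (1 : R) * ((w ^ (k + 1) : R⟦X⟧) : LaurentSeries R) := by
      rw [hMeq, mul_pow, HahnSeries.single_pow, PowerSeries.coe_pow, one_pow]
      norm_num
    rw [hp]
    have hco : (-1 : ℤ) = (k : ℤ) + (-(k + 1) : ℤ) := by omega
    rw [hco, HahnSeries.coeff_single_mul_add, one_mul]
    exact_mod_cast LaurentSeries.coeff_coe_powerSeries (w ^ (k + 1)) k
  constructor
  · intro k
    rw [hpowk k, hmain k]
  · have h0 := hpowk 0
    rw [pow_one] at h0
    rw [h0, hmain 0, ← LagAux.deriv_eq g, PowerSeries.coeff_derivativeFun, hg1]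
    norm_num
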